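/- arXiv:2103.03769 — 2 statements merged into one kernel-verified Lean document; each statement's English description precedes it below -/
import Mathlib

section
/- For λ ∈ (1/2, 1] and ρ ∈ (0, 1/2], with μ_s = (λ(3 − 2ρ) − √(λ²(3−2ρ)² − 4(2ρ − 1)(2 − 4λ)))/(2(1 − 2ρ)) (interpreted as (2λ−1)/λ when ρ = 1/2), we have 1/(1 − μ_s²(1/2 − ρ)) ≤ 2. -/
theorem stmt_9 (lam rho : ℝ) (hl : 1/2 < lam) (hl1 : lam ≤ 1)
    (hr0 : 0 < rho) (hr : rho ≤ 1/2) :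
    let mus := if rho = 1/2 then (2*lam - 1)/lam else
      (lam*(3 - 2*rho) -
        Real.sqrt (lam^2*(3 - 2*rho)^2 - 4*(2*rho - 1)*(2 - 4*lam))) / (2*(1 - 2*rho))
    1 / (1 - mus^2*(1/2 - rho)) ≤ 2 := by
  intro mus
  rcases eq_or_lt_of_le hr with heq | hlt
  · simp only [mus, if_pos heq, heq]
    norm_num
  · have hne : rho ≠ 1/2 := ne_of_lt hlt
    simp only [mus, if_neg hne]
    set D := lam^2*(3 - 2*rho)^2 - 4*(2*rho - 1)*(2 - 4*lam) with hD
    have ha0 : (0:ℝ) < 1 - 2*rho := by linarith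
    have hb0 : (0:ℝ) ≤ lam*(3 - 2*rho) := by nlinarith
    have hD0 : 0 ≤ D := by
      nlinarith [sq_nonneg (lam*(3 - 2*rho)^2 - 8*(1 - 2*rho)), sq_nonneg (1 - 2*rho - 2),
        sq_nonneg (3 - 2*rho), hr0, hlt]
    have hDb : D ≤ (lam*(3 - 2*rho))^2 := by nlinarith
    have hsb : Real.sqrt D ≤ lam*(3 - 2*rho) := by
      have h := Real.sqrt_le_sqrt hDb
      rwa [Real.sqrt_sq hb0] at h
    have hlow : lam*(3 - 2*rho) - 2*(1 - 2*rho) ≤ Real.sqrt D := by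
      have h1 : (lam*(3 - 2*rho) - 2*(1 - 2*rho))^2 ≤ D := by
        nlinarith [mul_nonneg (mul_nonneg ha0.le (by linarith : (0:ℝ) ≤ 1 - lam))
          (by linarith : (0:ℝ) ≤ 1 + 2*rho)]
      calc lam*(3 - 2*rho) - 2*(1 - 2*rho) ≤ |lam*(3 - 2*rho) - 2*(1 - 2*rho)| := le_abs_self _
        _ = Real.sqrt ((lam*(3 - 2*rho) - 2*(1 - 2*rho))^2) := (Real.sqrt_sq_eq_abs _).symm
        _ ≤ Real.sqrt D := Real.sqrt_le_sqrt h1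
    set mu := (lam*(3 - 2*rho) - Real.sqrt D) / (2*(1 - 2*rho)) with hmu
    have hmu0 : 0 ≤ mu := div_nonneg (by linarith) (by linarith)
    have hmu1 : mu ≤ 1 := by
      rw [hmu, div_le_one (by linarith)]; linarith
    have hmusq : mu^2 ≤ 1 := by nlinarith
    have hden : (1:ℝ)/2 ≤ 1 - mu^2*(1/2 - rho) := by nlinarith [sq_nonneg mu]
    rw [div_le_iff₀ (by linarith)]
    linarith
end

section
/- For λ ∈ (0, 1/2], the distribution G on [0,1]ⁿ supported on the full diagonal {(q,…,q) : q ∈ [0, 2λ]} with uniform density, paired with the linear function Π̄(q) = (v(n)/(2nλ))·∑_j q_j, satisfies: for every point q on the support, G's 'win-probability weighted payoff' Π(q) := (q/(2λ))·v(n) equals Π̄(q,…,q); and for any point q = (q₁,…,q_n) with all q_j ≤ 2λ and order statistics q^m_1 ≤ … ≤ q^m_n, the payoff ∑_{j=1}^n ((q^m_j − q^m_{j−1})/(2λ))·v(n − j + 1) is at most (v(n)/(2nλ))·∑_j q_j, where v is strictly convex increasing with v(0)=0 and q^m_0 = 0. -/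
/-! Discrete convexity with `v 0 = 0` gives `n * v k ≤ k * v n` for `k ≤ n`. Bounding each
`v (n - j + 1)` this way, the payoff is at most `v n / n` times
`∑ j, (q j - q (j - 1)) * (n - j + 1)`, and summation by parts turns that sum into `∑ j, q j`. -/

open Finset

section Abel

variable {R : Type*} [CommRing R]

theorem sum_Icc_sub_eq (q : ℕ → R) (h0 : q 0 = 0) (n : ℕ) :
    ∑ j ∈ Icc 1 n, (q j - q (j - 1)) = q n := by
  induction n with
  | zero => simp [h0]
  | succ n ih => rw [sum_Icc_succ_top (by omega), ih, Nat.add_sub_cancel, add_sub_cancel]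

theorem sum_Icc_sub_mul_eq_sum (q : ℕ → R) (h0 : q 0 = 0) (n : ℕ) :
    ∑ j ∈ Icc 1 n, (q j - q (j - 1)) * ((n : R) - j + 1) = ∑ j ∈ Icc 1 n, q j := by
  induction n with
  | zero => simp
  | succ n ih =>
    have hsplit : ∀ j ∈ Icc 1 n, (q j - q (j - 1)) * (((n + 1 : ℕ) : R) - j + 1)
        = (q j - q (j - 1)) * ((n : R) - j + 1) + (q j - q (j - 1)) := fun j _ ↦ by
      push_cast; ring
    rw [sum_Icc_succ_top (by omega), sum_Icc_succ_top (by omega), sum_congr rfl hsplit,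
      sum_add_distrib, ih, sum_Icc_sub_eq q h0, Nat.add_sub_cancel]
    push_cast
    ring

end Abel

section Convex

variable {R : Type*} [CommRing R] [LinearOrder R] [IsStrictOrderedRing R]

theorem monotone_sub_of_sub_lt_sub {v : ℕ → R}
    (hv : ∀ k, 1 ≤ k → v (k + 1) - v k > v k - v (k - 1)) :
    Monotone fun i ↦ v (i + 1) - v i :=
  monotone_nat_of_le_succ fun i ↦ by simpa using (hv (i + 1) (by omega)).le

/-- Chebyshev's sum inequality for the increments of `v` against the indicator of `[0, k)`. -/
theorem mul_le_mul_of_monotone_sub {v : ℕ → R} (hv : Monotone fun i ↦ v (i + 1) - v i)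
    (h0 : v 0 = 0) {k n : ℕ} (hkn : k ≤ n) : n * v k ≤ k * v n := by
  have hsum : ∀ m, ∑ i ∈ range m, (v (i + 1) - v i) = v m := fun m ↦ by
    rw [sum_range_sub, h0, sub_zero]
  have hind : Antitone fun i : ℕ ↦ if i < k then (1 : R) else 0 := fun i j hij ↦ by
    dsimp only; split_ifs <;> first | omega | norm_num
  have hfilter : (range n).filter (· < k) = range k := by
    ext i; simp only [mem_filter, mem_range]; omega
  simpa [ite_mul, sum_ite, hfilter, hsum] using
    ((hind.antivary hv).antivaryOn (range n : Set ℕ)).card_mul_sum_le_sum_mul_sum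

theorem mul_sum_Icc_sub_mul_le {v : ℕ → R} (hv : Monotone fun i ↦ v (i + 1) - v i)
    (h0 : v 0 = 0) (n : ℕ) (q : ℕ → R) (hq0 : q 0 = 0) (hq : MonotoneOn q (Set.Iic n)) :
    n * ∑ j ∈ Icc 1 n, (q j - q (j - 1)) * v (n - j + 1) ≤ v n * ∑ j ∈ Icc 1 n, q j := by
  rw [← sum_Icc_sub_mul_eq_sum q hq0, mul_sum, mul_sum]
  refine sum_le_sum fun j hj ↦ ?_
  obtain ⟨hj1, hjn⟩ := mem_Icc.1 hj
  have hinc : 0 ≤ q j - q (j - 1) :=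
    sub_nonneg.2 (hq (Set.mem_Iic.2 (by omega)) (Set.mem_Iic.2 hjn) (by omega))
  have hvj := mul_le_mul_of_monotone_sub hv h0 (show n - j + 1 ≤ n by omega)
  rw [Nat.cast_add, Nat.cast_sub hjn, Nat.cast_one] at hvj
  calc (n : R) * ((q j - q (j - 1)) * v (n - j + 1))
      = (q j - q (j - 1)) * (n * v (n - j + 1)) := by ring
    _ ≤ (q j - q (j - 1)) * ((n - j + 1) * v n) := mul_le_mul_of_nonneg_left hvj hinc
    _ = v n * ((q j - q (j - 1)) * (n - j + 1)) := by ring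

end Convex

theorem stmt_17_general (n : ℕ) (hn : 1 ≤ n) (lam : ℝ) (hl0 : 0 < lam)
    (v : ℕ → ℝ)
    (hconv : ∀ k : ℕ, 1 ≤ k → v (k+1) - v k > v k - v (k-1))
    (h0 : v 0 = 0) :
    (∀ q ∈ Set.Icc (0:ℝ) (2*lam),
      (q/(2*lam)) * v n = (v n/(2*n*lam)) * (n*q)) ∧
    ∀ q : ℕ → ℝ, q 0 = 0 → (∀ j k, j ≤ k → k ≤ n → q j ≤ q k) →
      (∀ j ≤ n, q j ≤ 2*lam) →
      (∑ j ∈ Finset.Icc 1 n, ((q j - q (j-1))/(2*lam)) * v (n - j + 1)) ≤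
        (v n/(2*n*lam)) * ∑ j ∈ Finset.Icc 1 n, q j := by
  have hnpos : (0 : ℝ) < n := by exact_mod_cast hn
  refine ⟨fun q _ ↦ by field_simp, fun q hq0 hq _ ↦ ?_⟩
  have key := mul_sum_Icc_sub_mul_le (monotone_sub_of_sub_lt_sub hconv) h0 n q hq0
    fun j _ k hk hjk ↦ hq j k hjk hk
  calc ∑ j ∈ Icc 1 n, (q j - q (j - 1)) / (2 * lam) * v (n - j + 1)
      = (∑ j ∈ Icc 1 n, (q j - q (j - 1)) * v (n - j + 1)) / (2 * lam) := by
        simp_rw [sum_div, div_mul_eq_mul_div]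
    _ ≤ ((v n * ∑ j ∈ Icc 1 n, q j) / n) / (2 * lam) := by
        gcongr
        rw [le_div_iff₀ hnpos, mul_comm]
        exact key
    _ = v n / (2 * n * lam) * ∑ j ∈ Icc 1 n, q j := by
        field_simp

theorem stmt_17 (n : ℕ) (hn : 1 ≤ n) (lam : ℝ) (hl0 : 0 < lam) (hl : lam ≤ 1/2)
    (v : ℕ → ℝ)
    (hconv : ∀ k : ℕ, 1 ≤ k → v (k+1) - v k > v k - v (k-1))
    (hmono : StrictMono v) (h0 : v 0 = 0) :
    (∀ q ∈ Set.Icc (0:ℝ) (2*lam),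
      (q/(2*lam)) * v n = (v n/(2*n*lam)) * (n*q)) ∧
    ∀ q : ℕ → ℝ, q 0 = 0 → (∀ j k, j ≤ k → k ≤ n → q j ≤ q k) →
      (∀ j ≤ n, q j ≤ 2*lam) →
      (∑ j ∈ Finset.Icc 1 n, ((q j - q (j-1))/(2*lam)) * v (n - j + 1)) ≤
        (v n/(2*n*lam)) * ∑ j ∈ Finset.Icc 1 n, q j :=
  stmt_17_general n hn lam hl0 v hconv h0
end
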